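/- Let 0 < δ < 1 and let A ∈ R^{m×N} have restricted isometry constant δ_s(A) ≤ δ. Let r = min{1,q} for p < q ≤ 2, 0 < p < 1. Then every v ∈ ker A satisfies ||v||_q ≤ 2^{1/r} (((1+δ)/(1-δ))^{1/2}) s^{-(1/r - 1/q)} ||v||_r. -/

import Mathlib

/-- The ℓp (quasi-)norm on ℝ^N: `(∑ |x ℓ|^p)^(1/p)`. -/
noncomputable def pnorm (p : ℝ) {N : ℕ} (x : Fin N → ℝ) : ℝ :=
  (∑ i, |x i| ^ p) ^ (1 / p)

/-- A vector is `s`-sparse if at most `s` of its coordinates are nonzero. -/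
def IsSparse (s : ℕ) {N : ℕ} (z : Fin N → ℝ) : Prop :=
  ∃ S : Finset (Fin N), S.card ≤ s ∧ ∀ i ∉ S, z i = 0

/-!
Sort the entries of `v` by decreasing modulus and cut the sorted vector into consecutive blocks
`u 0, u 1, …` of `s` entries. Every entry of `u (k + 1)` is at most the mean `‖u k‖₁ / s`, so
`‖u (k + 1)‖_q ≤ s^(1/q - 1) ‖u k‖₁` for every `q > 0`. Since `A v = 0`, we have
`A (u 0) = -∑ A (u (k + 1))`, and the two RIP bounds give
`‖u 0‖₂ ≤ √((1+δ)/(1-δ)) s^(-1/2) ‖v‖₁`; Hölder on the `s`-sparse `u 0` turns this into a bound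
on `‖u 0‖_q`, and the triangle inequality in `ℓ_q` (`1 ≤ q`) sums up.
For `q ≤ 1` we have `r = q` and the claim is trivial, the constant being at least `1`.
-/

open Finset Real Matrix

section Pnorm

variable {N : ℕ}

lemma pnorm_nonneg (q : ℝ) (x : Fin N → ℝ) : 0 ≤ pnorm q x := by
  unfold pnorm; positivity

lemma pnorm_one (x : Fin N → ℝ) : pnorm 1 x = ∑ i, |x i| := by
  simp [pnorm]

lemma pnorm_neg (q : ℝ) (x : Fin N → ℝ) : pnorm q (-x) = pnorm q x := by
  simp [pnorm]

lemma pnorm_eq_norm_toLp {q : ℝ} (hq : 0 < q) (x : Fin N → ℝ) :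
    pnorm q x = ‖WithLp.toLp (ENNReal.ofReal q) x‖ := by
  rw [PiLp.norm_eq_sum (by rwa [ENNReal.toReal_ofReal hq.le])]
  simp [pnorm, ENNReal.toReal_ofReal hq.le]

lemma pnorm_sum_le {q : ℝ} (hq : 1 ≤ q) {ι : Type*} (K : Finset ι) (x : ι → Fin N → ℝ) :
    pnorm q (∑ k ∈ K, x k) ≤ ∑ k ∈ K, pnorm q (x k) := by
  have : Fact (1 ≤ ENNReal.ofReal q) := ⟨by simpa using hq⟩
  simp only [pnorm_eq_norm_toLp (zero_lt_one.trans_le hq), WithLp.toLp_sum]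
  exact norm_sum_le _ _

lemma IsSparse.exists_card_le_sum_eq {s : ℕ} {x : Fin N → ℝ} (hx : IsSparse s x) :
    ∃ S : Finset (Fin N), #S ≤ s ∧ ∀ f : ℝ → ℝ, f 0 = 0 → ∑ i, f (x i) = ∑ i ∈ S, f (x i) := by
  obtain ⟨S, hS, hx⟩ := hx
  refine ⟨S, hS, fun f hf => (sum_subset (subset_univ S) fun i _ hi => ?_).symm⟩
  rw [hx i hi, hf]

lemma pnorm_le_of_isSparse_of_abs_le {q c : ℝ} {s : ℕ} (hq : 0 < q) {x : Fin N → ℝ}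
    (hx : IsSparse s x) (hc0 : 0 ≤ c) (hc : ∀ i, |x i| ≤ c) :
    pnorm q x ≤ (s : ℝ) ^ (1 / q) * c := by
  obtain ⟨S, hS, hsum⟩ := hx.exists_card_le_sum_eq
  have h : ∑ i, |x i| ^ q ≤ s * c ^ q := calc
    ∑ i, |x i| ^ q = ∑ i ∈ S, |x i| ^ q := hsum (|·| ^ q) (by simp [hq.ne'])
    _ ≤ ∑ i ∈ S, c ^ q := by gcongr with i; exact hc i
    _ ≤ s * c ^ q := by rw [sum_const, nsmul_eq_mul]; gcongr
  calc pnorm q x ≤ (s * c ^ q) ^ (1 / q) := by unfold pnorm; gcongr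
    _ = (s : ℝ) ^ (1 / q) * c := by
      rw [mul_rpow (by positivity) (by positivity), ← rpow_mul hc0, mul_one_div_cancel hq.ne',
        rpow_one]

lemma pnorm_le_rpow_mul_pnorm_two_of_isSparse {q : ℝ} {s : ℕ} (hq0 : 0 < q) (hq2 : q ≤ 2)
    {x : Fin N → ℝ} (hx : IsSparse s x) :
    pnorm q x ≤ (s : ℝ) ^ (1 / q - 1 / 2) * pnorm 2 x := by
  obtain ⟨S, hS, hsum⟩ := hx.exists_card_le_sum_eq
  have holder := rpow_sum_le_const_mul_sum_rpow_of_nonneg S (f := fun i => |x i| ^ q)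
    (p := 2 / q) (by rw [le_div_iff₀ hq0]; linarith) (fun i _ => by positivity)
  have hpow : ∀ i, (|x i| ^ q) ^ (2 / q) = |x i| ^ (2 : ℝ) := fun i => by
    rw [← rpow_mul (abs_nonneg _), mul_div_cancel₀ _ hq0.ne']
  simp only [hpow] at holder
  calc pnorm q x = ((∑ i ∈ S, |x i| ^ q) ^ (2 / q)) ^ (1 / 2 : ℝ) := by
        rw [pnorm, hsum (|·| ^ q) (by simp [hq0.ne']), ← rpow_mul (by positivity)]
        congr 1; field_simp
    _ ≤ ((#S : ℝ) ^ (2 / q - 1) * ∑ i ∈ S, |x i| ^ (2 : ℝ)) ^ (1 / 2 : ℝ) := by gcongr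
    _ = (#S : ℝ) ^ (1 / q - 1 / 2) * pnorm 2 x := by
        rw [pnorm, hsum (|·| ^ (2 : ℝ)) (by simp), mul_rpow (by positivity) (by positivity),
          ← rpow_mul (by positivity)]
        congr 2; ring
    _ ≤ (s : ℝ) ^ (1 / q - 1 / 2) * pnorm 2 x := by
        have : 1 / 2 ≤ 1 / q := one_div_le_one_div_of_le hq0 hq2
        gcongr
        exact pnorm_nonneg 2 x

end Pnorm

lemma mul_pnorm_two_le_sum_of_mulVec_sum_eq_zero {m N n : ℕ} {α β : ℝ}
    (A : Matrix (Fin m) (Fin N) ℝ) (u : ℕ → Fin N → ℝ)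
    (hA : A *ᵥ ∑ k ∈ range (n + 1), u k = 0)
    (hlow : α * pnorm 2 (u 0) ≤ pnorm 2 (A *ᵥ u 0))
    (hup : ∀ k, pnorm 2 (A *ᵥ u (k + 1)) ≤ β * pnorm 2 (u (k + 1))) :
    α * pnorm 2 (u 0) ≤ β * ∑ k ∈ range n, pnorm 2 (u (k + 1)) := by
  have hker : A *ᵥ u 0 = -∑ k ∈ range n, A *ᵥ u (k + 1) := by
    rw [mulVec_sum, sum_range_succ', add_comm] at hA
    exact eq_neg_of_add_eq_zero_left hA
  calc α * pnorm 2 (u 0) ≤ pnorm 2 (A *ᵥ u 0) := hlow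
    _ ≤ ∑ k ∈ range n, pnorm 2 (A *ᵥ u (k + 1)) := by
      rw [hker, pnorm_neg]; exact pnorm_sum_le one_le_two _ _
    _ ≤ β * ∑ k ∈ range n, pnorm 2 (u (k + 1)) := by
      rw [mul_sum]; exact sum_le_sum fun k _ => hup k

structure IsSortedBlockDecomposition {N : ℕ} (s n : ℕ) (v : Fin N → ℝ) (u : ℕ → Fin N → ℝ) :
    Prop where
  sum_eq : ∑ k ∈ range (n + 1), u k = v
  sum_pnorm_one_le : ∑ k ∈ range (n + 1), pnorm 1 (u k) ≤ pnorm 1 v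
  isSparse : ∀ k, IsSparse s (u k)
  mul_abs_succ_le : ∀ k i, (s : ℝ) * |u (k + 1) i| ≤ pnorm 1 (u k)

namespace IsSortedBlockDecomposition

variable {N s n : ℕ} {v : Fin N → ℝ} {u : ℕ → Fin N → ℝ}

lemma sum_range_pnorm_one_le (hu : IsSortedBlockDecomposition s n v u) :
    ∑ k ∈ range n, pnorm 1 (u k) ≤ pnorm 1 v := by
  refine le_trans ?_ hu.sum_pnorm_one_le
  rw [sum_range_succ]
  linarith [pnorm_nonneg 1 (u n)]

lemma pnorm_succ_le (hu : IsSortedBlockDecomposition s n v u) (hs : 0 < s) {q : ℝ} (hq : 0 < q)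
    (k : ℕ) : pnorm q (u (k + 1)) ≤ (s : ℝ) ^ (1 / q - 1) * pnorm 1 (u k) := by
  have hs' : (0 : ℝ) < s := by exact_mod_cast hs
  calc pnorm q (u (k + 1)) ≤ (s : ℝ) ^ (1 / q) * (pnorm 1 (u k) / s) :=
        pnorm_le_of_isSparse_of_abs_le hq (hu.isSparse _) (by positivity [pnorm_nonneg 1 (u k)])
          fun i => by rw [le_div_iff₀ hs', mul_comm]; exact hu.mul_abs_succ_le k i
    _ = (s : ℝ) ^ (1 / q - 1) * pnorm 1 (u k) := by
        rw [rpow_sub_one hs'.ne']; ring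

lemma sum_pnorm_succ_le (hu : IsSortedBlockDecomposition s n v u) (hs : 0 < s) {q : ℝ}
    (hq : 0 < q) : ∑ k ∈ range n, pnorm q (u (k + 1)) ≤ (s : ℝ) ^ (1 / q - 1) * pnorm 1 v :=
  calc ∑ k ∈ range n, pnorm q (u (k + 1))
      ≤ ∑ k ∈ range n, (s : ℝ) ^ (1 / q - 1) * pnorm 1 (u k) :=
        sum_le_sum fun k _ => hu.pnorm_succ_le hs hq k
    _ ≤ (s : ℝ) ^ (1 / q - 1) * pnorm 1 v := by
        rw [← mul_sum]; gcongr; exact hu.sum_range_pnorm_one_le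

lemma pnorm_le {m : ℕ} (hu : IsSortedBlockDecomposition s n v u) (hs : 0 < s) {q α β : ℝ}
    (hq1 : 1 ≤ q) (hq2 : q ≤ 2) (hα : 0 < α) (hβ : 0 ≤ β) (A : Matrix (Fin m) (Fin N) ℝ)
    (hv : A *ᵥ v = 0)
    (hlow : ∀ x, IsSparse s x → α * pnorm 2 x ≤ pnorm 2 (A *ᵥ x))
    (hup : ∀ x, IsSparse s x → pnorm 2 (A *ᵥ x) ≤ β * pnorm 2 x) :
    pnorm q v ≤ (1 + β / α) * (s : ℝ) ^ (1 / q - 1) * pnorm 1 v := by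
  have hq0 : 0 < q := zero_lt_one.trans_le hq1
  have hs' : (0 : ℝ) < s := by exact_mod_cast hs
  have hhead : pnorm 2 (u 0) ≤ β / α * (s : ℝ) ^ (1 / 2 - 1 : ℝ) * pnorm 1 v := by
    rw [mul_assoc, div_mul_eq_mul_div, le_div_iff₀ hα, mul_comm]
    calc α * pnorm 2 (u 0) ≤ β * ∑ k ∈ range n, pnorm 2 (u (k + 1)) :=
          mul_pnorm_two_le_sum_of_mulVec_sum_eq_zero A u (hu.sum_eq ▸ hv)
            (hlow _ (hu.isSparse 0)) fun k => hup _ (hu.isSparse _)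
      _ ≤ β * ((s : ℝ) ^ (1 / 2 - 1 : ℝ) * pnorm 1 v) := by
          gcongr; exact hu.sum_pnorm_succ_le hs two_pos
  calc pnorm q v ≤ pnorm q (u 0) + ∑ k ∈ range n, pnorm q (u (k + 1)) := by
        rw [← hu.sum_eq]
        refine (pnorm_sum_le hq1 _ _).trans_eq ?_
        rw [sum_range_succ', add_comm]
    _ ≤ (s : ℝ) ^ (1 / q - 1 / 2) * pnorm 2 (u 0) + (s : ℝ) ^ (1 / q - 1) * pnorm 1 v := by
        gcongr
        · exact pnorm_le_rpow_mul_pnorm_two_of_isSparse hq0 hq2 (hu.isSparse 0)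
        · exact hu.sum_pnorm_succ_le hs hq0
    _ ≤ (s : ℝ) ^ (1 / q - 1 / 2) * (β / α * (s : ℝ) ^ (1 / 2 - 1 : ℝ) * pnorm 1 v) +
          (s : ℝ) ^ (1 / q - 1) * pnorm 1 v := by gcongr
    _ = (1 + β / α) * (s : ℝ) ^ (1 / q - 1) * pnorm 1 v := by
        rw [show (1 / q - 1 : ℝ) = (1 / q - 1 / 2) + (1 / 2 - 1) by ring, rpow_add hs']
        ring

end IsSortedBlockDecomposition

section Construction

variable {N : ℕ}

def blockPart (b : Fin N → ℕ) (v : Fin N → ℝ) (k : ℕ) : Fin N → ℝ :=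
  fun i => if b i = k then v i else 0

lemma isSortedBlockDecomposition_blockPart {b : Fin N → ℕ} {v : Fin N → ℝ} {s n : ℕ}
    (hbn : ∀ i, b i ≤ n) (hcard_le : ∀ k, #{i | b i = k} ≤ s)
    (hcard_ge : ∀ i k, b i = k + 1 → s ≤ #{j | b j = k})
    (hanti : ∀ i j, b j < b i → |v i| ≤ |v j|) :
    IsSortedBlockDecomposition s n v (blockPart b v) where
  sum_eq := by
    ext i
    simp [blockPart, Finset.sum_apply, Nat.lt_succ_of_le (hbn i)]
  sum_pnorm_one_le := by
    simp_rw [pnorm_one]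
    rw [sum_comm]
    refine sum_le_sum fun i _ => ?_
    simp [blockPart, apply_ite, Nat.lt_succ_of_le (hbn i)]
  isSparse k := ⟨({i | b i = k} : Finset _), hcard_le k, fun i hi => by simp_all [blockPart]⟩
  mul_abs_succ_le k i := by
    by_cases hi : b i = k + 1
    · rw [show pnorm 1 (blockPart b v k) = ∑ j with b j = k, |v j| by
        simp [pnorm_one, blockPart, apply_ite, sum_ite]]
      simp only [blockPart, hi, if_true]
      calc (s : ℝ) * |v i| ≤ #{j | b j = k} • |v i| := by
            rw [nsmul_eq_mul]; gcongr; exact hcard_ge i k hi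
        _ ≤ ∑ j with b j = k, |v j| :=
            card_nsmul_le_sum _ _ _ fun j hj => hanti i j (by simp_all)
    · simp [blockPart, hi, pnorm_nonneg]

noncomputable def sortedBlockIndex (s : ℕ) (v : Fin N → ℝ) (i : Fin N) : ℕ :=
  ((Tuple.sort fun j => -|v j|).symm i : ℕ) / s

section SortedBlockIndex

variable {s : ℕ} {v : Fin N → ℝ}

lemma sortedBlockIndex_le (i : Fin N) : sortedBlockIndex s v i ≤ N :=
  (Nat.div_le_self _ _).trans (Fin.is_lt _).le

lemma abs_le_of_sortedBlockIndex_lt {i j : Fin N}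
    (h : sortedBlockIndex s v j < sortedBlockIndex s v i) : |v i| ≤ |v j| := by
  set σ := Tuple.sort fun j => -|v j|
  have hji : σ.symm j ≤ σ.symm i := by
    by_contra! hij
    exact h.not_ge (Nat.div_le_div_right hij.le)
  simpa [σ] using Tuple.monotone_sort (fun j => -|v j|) hji

lemma card_sortedBlockIndex_eq_le (hs : 0 < s) (k : ℕ) :
    #{i | sortedBlockIndex s v i = k} ≤ s := by
  calc #{i | sortedBlockIndex s v i = k} ≤ #(Ico (k * s) (k * s + s)) := by
        refine card_le_card_of_injOn (fun i => ((Tuple.sort fun j => -|v j|).symm i : ℕ))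
          (fun i hi => ?_) fun i _ j _ hij => Equiv.injective _ (Fin.val_injective hij)
        simp only [sortedBlockIndex, mem_coe, mem_filter, mem_univ, true_and,
          Nat.div_eq_iff hs] at hi
        simp only [coe_Ico, Set.mem_Ico]
        omega
    _ = s := by simp

lemma le_card_sortedBlockIndex_eq (hs : 0 < s) {i : Fin N} {k : ℕ}
    (hi : sortedBlockIndex s v i = k + 1) : s ≤ #{j | sortedBlockIndex s v j = k} := by
  set σ := Tuple.sort fun j => -|v j|
  have hlt : k * s + s ≤ N := by
    have := (σ.symm i).is_lt
    rw [sortedBlockIndex, Nat.div_eq_iff hs] at hi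
    nlinarith
  calc s = #(Ico (k * s) (k * s + s)) := by simp
    _ ≤ #{j | sortedBlockIndex s v j = k} := by
        refine card_le_card_of_surjOn (fun i => (σ.symm i : ℕ)) fun t ht => ?_
        simp only [coe_Ico, Set.mem_Ico] at ht
        refine ⟨σ ⟨t, by omega⟩, ?_, by simp⟩
        simp only [sortedBlockIndex, mem_coe, mem_filter, mem_univ, true_and,
          Nat.div_eq_iff hs]
        simp only [Equiv.symm_apply_apply, σ]
        omega

end SortedBlockIndex

lemma exists_isSortedBlockDecomposition {s : ℕ} (hs : 0 < s) (v : Fin N → ℝ) :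
    ∃ u, IsSortedBlockDecomposition s N v u :=
  ⟨_, isSortedBlockDecomposition_blockPart sortedBlockIndex_le (card_sortedBlockIndex_eq_le hs)
    (fun _ _ => le_card_sortedBlockIndex_eq hs) fun _ _ => abs_le_of_sortedBlockIndex_lt⟩

end Construction

theorem kernel_norm_estimate_general (p q δ : ℝ) (hp0 : 0 < p)
    (hpq : p < q) (hq2 : q ≤ 2) (hδ0 : 0 < δ) (hδ1 : δ < 1)
    {N m s : ℕ} (hs : 0 < s) (A : Matrix (Fin m) (Fin N) ℝ)
    (hRIP : ∀ x : Fin N → ℝ, IsSparse s x →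
      (1 - δ) * pnorm 2 x ^ 2 ≤ pnorm 2 (Matrix.mulVec A x) ^ 2 ∧
        pnorm 2 (Matrix.mulVec A x) ^ 2 ≤ (1 + δ) * pnorm 2 x ^ 2)
    (v : Fin N → ℝ) (hv : Matrix.mulVec A v = 0) :
    pnorm q v ≤ 2 ^ (1 / min 1 q) * ((1 + δ) / (1 - δ)) ^ ((1 : ℝ) / 2) *
      (s : ℝ) ^ (-(1 / min 1 q - 1 / q)) * pnorm (min 1 q) v := by
  set C := ((1 + δ) / (1 - δ)) ^ ((1 : ℝ) / 2)
  have hC : 1 ≤ C := one_le_rpow ((one_le_div (by linarith)).2 (by linarith)) (by norm_num)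
  rcases le_or_gt q 1 with hq1 | hq1
  · rw [min_eq_right hq1, sub_self, neg_zero, rpow_zero, mul_one]
    have h2 : 1 ≤ (2 : ℝ) ^ (1 / q) := one_le_rpow one_le_two (by positivity [hp0.trans hpq])
    exact le_mul_of_one_le_left (pnorm_nonneg _ _) (one_le_mul_of_one_le_of_one_le h2 hC)
  rw [min_eq_left hq1.le, div_one, rpow_one, neg_sub]
  have hlow : ∀ x, IsSparse s x → √(1 - δ) * pnorm 2 x ≤ pnorm 2 (A *ᵥ x) := fun x hx =>
    (pow_le_pow_iff_left₀ (mul_nonneg (sqrt_nonneg _) (pnorm_nonneg _ _)) (pnorm_nonneg _ _)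
      two_ne_zero).1 (by rw [mul_pow, sq_sqrt (by linarith)]; exact (hRIP x hx).1)
  have hup : ∀ x, IsSparse s x → pnorm 2 (A *ᵥ x) ≤ √(1 + δ) * pnorm 2 x := fun x hx =>
    (pow_le_pow_iff_left₀ (pnorm_nonneg _ _) (mul_nonneg (sqrt_nonneg _) (pnorm_nonneg _ _))
      two_ne_zero).1 (by rw [mul_pow, sq_sqrt (by linarith)]; exact (hRIP x hx).2)
  have hCeq : √(1 + δ) / √(1 - δ) = C := by
    rw [← sqrt_div (by linarith), sqrt_eq_rpow]
  obtain ⟨u, hu⟩ := exists_isSortedBlockDecomposition hs v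
  calc pnorm q v ≤ (1 + C) * (s : ℝ) ^ (1 / q - 1) * pnorm 1 v :=
        hCeq ▸ hu.pnorm_le hs hq1.le hq2 (sqrt_pos.2 (by linarith)) (sqrt_nonneg _) A hv hlow hup
    _ ≤ 2 * C * (s : ℝ) ^ (1 / q - 1) * pnorm 1 v := by
        have := pnorm_nonneg 1 v
        gcongr
        linarith

/-- If `A` has restricted isometry constant `δ_s(A) ≤ δ < 1`, with
`0 < p < 1`, `p < q ≤ 2`, and `r = min{1, q}`, then every `v ∈ ker A`
satisfies `‖v‖_q ≤ 2^{1/r} √((1+δ)/(1-δ)) s^{-(1/r - 1/q)} ‖v‖_r`. -/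
theorem kernel_norm_estimate (p q δ : ℝ) (hp0 : 0 < p) (hp1 : p < 1)
    (hpq : p < q) (hq2 : q ≤ 2) (hδ0 : 0 < δ) (hδ1 : δ < 1)
    {N m s : ℕ} (hs : 0 < s) (A : Matrix (Fin m) (Fin N) ℝ)
    (hRIP : ∀ x : Fin N → ℝ, IsSparse s x →
      (1 - δ) * pnorm 2 x ^ 2 ≤ pnorm 2 (Matrix.mulVec A x) ^ 2 ∧
        pnorm 2 (Matrix.mulVec A x) ^ 2 ≤ (1 + δ) * pnorm 2 x ^ 2)
    (v : Fin N → ℝ) (hv : Matrix.mulVec A v = 0) :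
    pnorm q v ≤ 2 ^ (1 / min 1 q) * ((1 + δ) / (1 - δ)) ^ ((1 : ℝ) / 2) *
      (s : ℝ) ^ (-(1 / min 1 q - 1 / q)) * pnorm (min 1 q) v :=
  kernel_norm_estimate_general p q δ hp0 hpq hq2 hδ0 hδ1 hs A hRIP v hv
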